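/- arXiv:2310.02559 — 2 statements merged into one kernel-verified Lean document; each statement's English description precedes it below -/
import Mathlib

section
/- Let E be a real inner product space, D a finite set with |D| = N, and f_n : E → ℝ differentiable for n ∈ D with global loss F(w) = (1/N)·∑_{n∈D} f_n(w). Assume F is μ-strongly convex and L-smooth with 0 < μ ≤ L, the sample-gradient bound ‖∇f_n(w)‖² ≤ ξ1 + ξ2·‖∇F(w)‖² holds for all n ∈ D and w ∈ E (ξ1 ≥ 0, ξ2 > 0), and w* is a global minimizer of F. Let N_f, N_c be positive integers with N_f ≤ N, N_c ≤ N, A = N_f·(N−N_f) + N_c·(N−N_c) > 0, and 0 < ξ2 < (N_f+N_c)²/(4A); set a1 = N_f/(N_f+N_c), a2 = N_c/(N_f+N_c), ρ1 = 1 − μ/L + 4μξ2·A/(L·(N_f+N_c)²), ρ2 = 2ξ1·A/(L·(N_f+N_c)²). For each round t = 1, …, T, let S_{f,t}, S_{c,t} ⊆ D with |S_{f,t}| = N_f, |S_{c,t}| = N_c, let g_t^f = (1/N_f)·∑_{n∈S_{f,t}} ∇f_n(w_t), g_t^c = (1/N_c)·∑_{n∈S_{c,t}} ∇f_n(w_t),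 let ĝ_t^f ∈ E satisfy ‖g_t^f − ĝ_t^f‖² ≤ ε_t with ε_t ≥ 0, and update w_{t+1} = w_t − (1/L)·(a1·ĝ_t^f + a2·g_t^c). Then the optimality gap after T rounds satisfies F(w_{T+1}) − F(w*) ≤ ρ1^T·(F(w_1) − F(w*)) + ρ2·(1 − ρ1^T)/(1 − ρ1) + ∑_{t=1}^T ρ1^{T−t}·(a1²/L)·ε_t. -/
local notation "⟪" x ", " y "⟫" => @inner ℝ _ _ x y

open Finset

/-!
Each round is an inexact gradient step `w ↦ w - v / L`. Writing a subset sum as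
`∑_S = (|S|/N) ∑_D + (1 - |S|/N) ∑_S - (|S|/N) ∑_{D∖S}` bounds the sampling error of each
minibatch, so the pooled direction `v` satisfies
`‖v - ∇F‖² ≤ κ (ξ1 + ξ2 ‖∇F‖²) + 2 a1² ε_t` with `κ = 4A / (N_f + N_c)²`.
The descent lemma of `L`-smoothness gives
`F(w - v / L) ≤ F(w) + (‖v - ∇F‖² - ‖∇F‖²) / (2L)`, and strong convexity gives the
Polyak–Łojasiewicz inequality `2μ (F(w) - F(w*)) ≤ ‖∇F(w)‖²`; as `κ ξ2 < 1`, together they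
contract the gap by `ρ1 = 1 - μ (1 - κ ξ2) / L` per round up to the additive `ρ2 + a1² ε_t / L`,
and unrolling this linear recursion gives the bound.
-/

section Sampling

variable {E : Type*} [NormedAddCommGroup E] [NormedSpace ℝ E] {ι : Type*}

theorem norm_sum_sub_card_div_smul_sum_le {D S : Finset ι} (hS : S ⊆ D) {x : ι → E} {s : ℝ}
    (hx : ∀ n ∈ D, ‖x n‖ ≤ s) :
    ‖∑ n ∈ S, x n - ((#S : ℝ) / #D) • ∑ n ∈ D, x n‖ ≤ 2 * #S * ((#D : ℝ) - #S) / #D * s := by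
  classical
  rcases D.eq_empty_or_nonempty with rfl | hD
  · simp [subset_empty.mp hS]
  set m : ℝ := ((#S : ℕ) : ℝ)
  set N : ℝ := ((#D : ℕ) : ℝ)
  have hN : 0 < N := by simp [N, hD.card_pos]
  have hmN : m ≤ N := by simp only [m, N]; exact_mod_cast card_le_card hS
  have hsum_le {U : Finset ι} (hU : U ⊆ D) : ‖∑ n ∈ U, x n‖ ≤ #U * s :=
    (norm_sum_le _ _).trans <| (sum_le_sum fun n hn ↦ hx n (hU hn)).trans_eq (by simp)
  have hsplit : ∑ n ∈ S, x n - (m / N) • ∑ n ∈ D, x n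
      = (1 - m / N) • ∑ n ∈ S, x n - (m / N) • ∑ n ∈ D \ S, x n := by
    rw [← sum_sdiff hS]
    module
  have hcard : ((#(D \ S) : ℕ) : ℝ) = N - m := by
    simp only [m, N]; rw [card_sdiff_of_subset hS, Nat.cast_sub (card_le_card hS)]
  have h1m : 0 ≤ 1 - m / N := by rw [sub_nonneg, div_le_one hN]; exact hmN
  calc ‖∑ n ∈ S, x n - (m / N) • ∑ n ∈ D, x n‖
      ≤ (1 - m / N) * (m * s) + m / N * ((N - m) * s) := by
        rw [hsplit]
        refine (norm_sub_le _ _).trans (add_le_add ?_ ?_) <;>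
          rw [norm_smul, Real.norm_of_nonneg (by positivity)]
        · exact mul_le_mul_of_nonneg_left (hsum_le hS) h1m
        · exact mul_le_mul_of_nonneg_left (hcard ▸ hsum_le sdiff_subset) (by positivity)
    _ = 2 * m * (N - m) / N * s := by field_simp; ring

theorem norm_pooled_average_sub_average_sq_le {D S₁ S₂ : Finset ι} (hS₁ : S₁ ⊆ D) (hS₂ : S₂ ⊆ D)
    {m₁ m₂ N : ℕ} (hm₁ : #S₁ = m₁) (hm₂ : #S₂ = m₂) (hN : #D = N) (hm₁pos : 0 < m₁)
    (hm₂pos : 0 < m₂) {x : ι → E} {B : ℝ} (hx : ∀ n ∈ D, ‖x n‖ ^ 2 ≤ B) :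
    ‖((m₁ : ℝ) / (m₁ + m₂)) • ((1 / (m₁ : ℝ)) • ∑ n ∈ S₁, x n)
        + ((m₂ : ℝ) / (m₁ + m₂)) • ((1 / (m₂ : ℝ)) • ∑ n ∈ S₂, x n)
        - (1 / (N : ℝ)) • ∑ n ∈ D, x n‖ ^ 2
      ≤ 2 * (m₁ * ((N : ℝ) - m₁) + m₂ * ((N : ℝ) - m₂)) / ((m₁ : ℝ) + m₂) ^ 2 * B := by
  obtain ⟨n₀, hn₀⟩ := card_pos.mp (hm₁ ▸ hm₁pos)
  have hB : 0 ≤ B := (sq_nonneg _).trans (hx n₀ (hS₁ hn₀))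
  have hs : ∀ n ∈ D, ‖x n‖ ≤ √B := fun n hn ↦ Real.le_sqrt_of_sq_le (hx n hn)
  have hN₀ : (0 : ℝ) < N := by
    rw [← hN]; exact_mod_cast (card_pos.mpr ⟨n₀, hS₁ hn₀⟩)
  have h₁ := hm₁ ▸ hN ▸ norm_sum_sub_card_div_smul_sum_le hS₁ hs
  have h₂ := hm₂ ▸ hN ▸ norm_sum_sub_card_div_smul_sum_le hS₂ hs
  set A : ℝ := m₁ * ((N : ℝ) - m₁) + m₂ * ((N : ℝ) - m₂)
  set M : ℝ := (m₁ : ℝ) + m₂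
  have hM : 0 < M := by positivity
  -- each `m (N - m)` is at most `N² / 4`
  have hA : 2 * A ≤ (N : ℝ) ^ 2 := by
    nlinarith [sq_nonneg ((N : ℝ) - 2 * m₁), sq_nonneg ((N : ℝ) - 2 * m₂)]
  have hA₀ : 0 ≤ A := by
    have hm₁N : (m₁ : ℝ) ≤ N := by exact_mod_cast hm₁ ▸ hN ▸ card_le_card hS₁
    have hm₂N : (m₂ : ℝ) ≤ N := by exact_mod_cast hm₂ ▸ hN ▸ card_le_card hS₂
    exact add_nonneg (mul_nonneg (by positivity) (sub_nonneg.2 hm₁N))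
      (mul_nonneg (by positivity) (sub_nonneg.2 hm₂N))
  have hpool : ((m₁ : ℝ) / M) • ((1 / (m₁ : ℝ)) • ∑ n ∈ S₁, x n)
        + ((m₂ : ℝ) / M) • ((1 / (m₂ : ℝ)) • ∑ n ∈ S₂, x n) - (1 / (N : ℝ)) • ∑ n ∈ D, x n
      = (1 / M) • ((∑ n ∈ S₁, x n - ((m₁ : ℝ) / N) • ∑ n ∈ D, x n)
        + (∑ n ∈ S₂, x n - ((m₂ : ℝ) / N) • ∑ n ∈ D, x n)) := by
    match_scalars <;> field_simp
    ring
  have hnorm : ‖((m₁ : ℝ) / M) • ((1 / (m₁ : ℝ)) • ∑ n ∈ S₁, x n)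
        + ((m₂ : ℝ) / M) • ((1 / (m₂ : ℝ)) • ∑ n ∈ S₂, x n) - (1 / (N : ℝ)) • ∑ n ∈ D, x n‖
      ≤ 2 * A / (N * M) * √B := by
    rw [hpool, norm_smul, Real.norm_of_nonneg (by positivity)]
    calc 1 / M * ‖_ + _‖ ≤ 1 / M * (2 * m₁ * ((N : ℝ) - m₁) / N * √B
          + 2 * m₂ * ((N : ℝ) - m₂) / N * √B) :=
          mul_le_mul_of_nonneg_left ((norm_add_le _ _).trans (add_le_add h₁ h₂)) (by positivity)
      _ = 2 * A / (N * M) * √B := by field_simp; ring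
  calc _ ≤ (2 * A / (N * M) * √B) ^ 2 := pow_le_pow_left₀ (norm_nonneg _) hnorm 2
    _ = 2 * A / M ^ 2 * B * (2 * A / N ^ 2) := by
      rw [mul_pow, Real.sq_sqrt hB]; field_simp
    _ ≤ 2 * A / M ^ 2 * B := by
      refine mul_le_of_le_one_right (by positivity) ?_
      rw [div_le_one (by positivity)]; exact hA

theorem norm_smul_add_smul_sub_sq_le (a b : ℝ) (u û w g : E) :
    ‖a • û + b • w - g‖ ^ 2 ≤ 2 * ‖a • u + b • w - g‖ ^ 2 + 2 * (a ^ 2 * ‖û - u‖ ^ 2) := by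
  have hsplit : a • û + b • w - g = (a • u + b • w - g) + a • (û - u) := by module
  rw [hsplit, ← mul_add, ← sq_abs a, ← mul_pow, ← Real.norm_eq_abs, ← norm_smul]
  exact (pow_le_pow_left₀ (norm_nonneg _) (norm_add_le _ _) 2).trans add_sq_le

theorem norm_pooled_inexact_average_sub_average_sq_le {D S₁ S₂ : Finset ι} (hS₁ : S₁ ⊆ D)
    (hS₂ : S₂ ⊆ D) {m₁ m₂ N : ℕ} (hm₁ : #S₁ = m₁) (hm₂ : #S₂ = m₂) (hN : #D = N)
    (hm₁pos : 0 < m₁) (hm₂pos : 0 < m₂) {x : ι → E} {B : ℝ} (hx : ∀ n ∈ D, ‖x n‖ ^ 2 ≤ B)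
    {û : E} {ε : ℝ} (hû : ‖(1 / (m₁ : ℝ)) • ∑ n ∈ S₁, x n - û‖ ^ 2 ≤ ε) :
    ‖((m₁ : ℝ) / (m₁ + m₂)) • û + ((m₂ : ℝ) / (m₁ + m₂)) • ((1 / (m₂ : ℝ)) • ∑ n ∈ S₂, x n)
        - (1 / (N : ℝ)) • ∑ n ∈ D, x n‖ ^ 2
      ≤ 4 * (m₁ * ((N : ℝ) - m₁) + m₂ * ((N : ℝ) - m₂)) / ((m₁ : ℝ) + m₂) ^ 2 * B
        + 2 * (((m₁ : ℝ) / (m₁ + m₂)) ^ 2 * ε) := by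
  have hpool := norm_pooled_average_sub_average_sq_le hS₁ hS₂ hm₁ hm₂ hN hm₁pos hm₂pos hx
  have herr := mul_le_mul_of_nonneg_left (norm_sub_rev û _ ▸ hû)
    (sq_nonneg ((m₁ : ℝ) / (m₁ + m₂)))
  refine (norm_smul_add_smul_sub_sq_le _ _ ((1 / (m₁ : ℝ)) • ∑ n ∈ S₁, x n) û _ _).trans ?_
  linear_combination 2 * hpool + 2 * herr

end Sampling

theorem gradient_const_mul_sum {E : Type*} [NormedAddCommGroup E] [InnerProductSpace ℝ E]
    [CompleteSpace E] {ι : Type*} {D : Finset ι} {f : ι → E → ℝ} {x : E}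
    (hf : ∀ n ∈ D, DifferentiableAt ℝ (f n) x) (c : ℝ) :
    gradient (fun w ↦ c * ∑ n ∈ D, f n w) x = c • ∑ n ∈ D, gradient (f n) x := by
  have h := (HasFDerivAt.fun_sum fun n hn ↦ (hf n hn).hasFDerivAt).const_mul c
  rw [(hasFDerivAt_iff_hasGradientAt.mp h).gradient, map_smul, map_sum]
  rfl

section Descent

variable {E : Type*} [NormedAddCommGroup E] [InnerProductSpace ℝ E]

theorem polyak_lojasiewicz_of_quadratic_lower_bound {F : E → ℝ} {x g y : E} {μ : ℝ} (hμ : 0 < μ)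
    (hsc : F x + ⟪y - x, g⟫ + μ / 2 * ‖y - x‖ ^ 2 ≤ F y) :
    2 * μ * (F x - F y) ≤ ‖g‖ ^ 2 := by
  nlinarith [neg_abs_le ⟪y - x, g⟫, abs_real_inner_le_norm (y - x) g,
    sq_nonneg (μ * ‖y - x‖ - ‖g‖)]

theorem apply_sub_smul_le_of_quadratic_upper_bound {F : E → ℝ} {x g : E} {L : ℝ} (hL : 0 < L)
    (hsm : ∀ y, F y ≤ F x + ⟪y - x, g⟫ + L / 2 * ‖y - x‖ ^ 2) (v : E) :
    F (x - (1 / L) • v) ≤ F x + (‖v - g‖ ^ 2 - ‖g‖ ^ 2) / (2 * L) := by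
  have h := hsm (x - (1 / L) • v)
  rw [sub_sub_cancel_left, norm_neg, norm_smul, Real.norm_of_nonneg (by positivity),
    inner_neg_left, real_inner_smul_left] at h
  rw [norm_sub_sq_real]
  convert h using 1
  field_simp
  ring

theorem inexact_gradient_step_gap_le {F : E → ℝ} {x g v y : E} {μ L κ ξ₁ ξ₂ δ : ℝ}
    (hμ : 0 < μ) (hL : 0 < L) (hκξ₂ : κ * ξ₂ ≤ 1)
    (hsc : F x + ⟪y - x, g⟫ + μ / 2 * ‖y - x‖ ^ 2 ≤ F y)
    (hsm : ∀ z, F z ≤ F x + ⟪z - x, g⟫ + L / 2 * ‖z - x‖ ^ 2)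
    (hv : ‖v - g‖ ^ 2 ≤ κ * (ξ₁ + ξ₂ * ‖g‖ ^ 2) + δ) :
    F (x - (1 / L) • v) - F y
      ≤ (1 - μ * (1 - κ * ξ₂) / L) * (F x - F y) + ξ₁ * κ / (2 * L) + δ / (2 * L) := by
  have hdesc := apply_sub_smul_le_of_quadratic_upper_bound hL hsm v
  have hgap : (1 - κ * ξ₂) * (2 * μ * (F x - F y)) ≤ (1 - κ * ξ₂) * ‖g‖ ^ 2 :=
    mul_le_mul_of_nonneg_left (polyak_lojasiewicz_of_quadratic_lower_bound hμ hsc) (by linarith)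
  have hstep : (‖v - g‖ ^ 2 - ‖g‖ ^ 2) / (2 * L)
      ≤ -(μ * (1 - κ * ξ₂) / L) * (F x - F y) + ξ₁ * κ / (2 * L) + δ / (2 * L) := by
    rw [div_le_iff₀ (by positivity)]
    field_simp
    linarith
  linarith

end Descent

theorem le_pow_mul_add_geom_sum_add_sum_of_le_mul_add {u c : ℕ → ℝ} {r b : ℝ} (hr : 0 ≤ r)
    {T : ℕ} (h : ∀ t, 1 ≤ t → t ≤ T → u (t + 1) ≤ r * u t + b + c t) :
    u (T + 1) ≤ r ^ T * u 1 + b * ∑ j ∈ range T, r ^ j + ∑ t ∈ Icc 1 T, r ^ (T - t) * c t := by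
  induction T with
  | zero => simp
  | succ T ih =>
    have hT := ih fun t h1 h2 ↦ h t h1 (h2.trans T.le_succ)
    have hshift : ∑ t ∈ Icc 1 T, r ^ (T + 1 - t) * c t = r * ∑ t ∈ Icc 1 T, r ^ (T - t) * c t := by
      rw [mul_sum]
      refine sum_congr rfl fun t ht ↦ ?_
      rw [Nat.sub_add_comm (mem_Icc.mp ht).2, pow_succ]
      ring
    rw [sum_Icc_succ_top (by omega), hshift, geom_sum_succ, Nat.sub_self, pow_zero, pow_succ]
    linarith [h (T + 1) (by omega) le_rfl, mul_le_mul_of_nonneg_left hT hr]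

theorem le_pow_mul_add_geom_add_sum_of_le_mul_add {u c : ℕ → ℝ} {r b : ℝ} (hr₀ : 0 ≤ r)
    (hr₁ : r ≠ 1) {T : ℕ} (h : ∀ t, 1 ≤ t → t ≤ T → u (t + 1) ≤ r * u t + b + c t) :
    u (T + 1) ≤ r ^ T * u 1 + b * (1 - r ^ T) / (1 - r) + ∑ t ∈ Icc 1 T, r ^ (T - t) * c t := by
  have h := le_pow_mul_add_geom_sum_add_sum_of_le_mul_add hr₀ h
  rwa [geom_sum_eq hr₁, ← neg_div_neg_eq, neg_sub, neg_sub, ← mul_div_assoc] at h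

theorem semifl_optimality_gap_general
    {E : Type*} [NormedAddCommGroup E] [InnerProductSpace ℝ E] [CompleteSpace E]
    {ι : Type*} (D : Finset ι) (N : ℕ) (hN : D.card = N)
    (f : ι → E → ℝ) (hf : ∀ n ∈ D, Differentiable ℝ (f n))
    (F : E → ℝ) (hF : ∀ w : E, F w = (1 / (N : ℝ)) * ∑ n ∈ D, f n w)
    (μ L : ℝ) (hμ : 0 < μ) (hμL : μ ≤ L)
    (hsc : ∀ w w' : E,
      F w ≥ F w' + ⟪w - w', gradient F w'⟫ + μ / 2 * ‖w - w'‖ ^ 2)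
    (hsm : ∀ w w' : E,
      F w ≤ F w' + ⟪w - w', gradient F w'⟫ + L / 2 * ‖w - w'‖ ^ 2)
    (ξ1 ξ2 : ℝ) (hξ2pos : 0 < ξ2)
    (hgradbound : ∀ n ∈ D, ∀ w : E,
      ‖gradient (f n) w‖ ^ 2 ≤ ξ1 + ξ2 * ‖gradient F w‖ ^ 2)
    (wstar : E)
    (Nf Nc : ℕ) (hNf : 0 < Nf) (hNc : 0 < Nc)
    (A : ℝ) (hA : A = (Nf : ℝ) * ((N : ℝ) - Nf) + (Nc : ℝ) * ((N : ℝ) - Nc))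
    (hApos : 0 < A)
    (hξ2A : ξ2 < ((Nf : ℝ) + Nc) ^ 2 / (4 * A))
    (a1 a2 : ℝ) (ha1 : a1 = (Nf : ℝ) / ((Nf : ℝ) + Nc))
    (ha2 : a2 = (Nc : ℝ) / ((Nf : ℝ) + Nc))
    (ρ1 ρ2 : ℝ)
    (hρ1 : ρ1 = 1 - μ / L + 4 * μ * ξ2 * A / (L * ((Nf : ℝ) + Nc) ^ 2))
    (hρ2 : ρ2 = 2 * ξ1 * A / (L * ((Nf : ℝ) + Nc) ^ 2))
    (T : ℕ)
    (Sf Sc : ℕ → Finset ι)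
    (hSfD : ∀ t : ℕ, 1 ≤ t → t ≤ T → Sf t ⊆ D)
    (hScD : ∀ t : ℕ, 1 ≤ t → t ≤ T → Sc t ⊆ D)
    (hSf : ∀ t : ℕ, 1 ≤ t → t ≤ T → (Sf t).card = Nf)
    (hSc : ∀ t : ℕ, 1 ≤ t → t ≤ T → (Sc t).card = Nc)
    (w : ℕ → E) (gfhat : ℕ → E) (ε : ℕ → ℝ)
    (hagg : ∀ t : ℕ, 1 ≤ t → t ≤ T →
      ‖(1 / (Nf : ℝ)) • ∑ n ∈ Sf t, gradient (f n) (w t) - gfhat t‖ ^ 2 ≤ ε t)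
    (hupd : ∀ t : ℕ, 1 ≤ t → t ≤ T →
      w (t + 1) = w t - (1 / L) •
        (a1 • gfhat t + a2 • ((1 / (Nc : ℝ)) • ∑ n ∈ Sc t, gradient (f n) (w t)))) :
    F (w (T + 1)) - F wstar ≤
      ρ1 ^ T * (F (w 1) - F wstar) + ρ2 * (1 - ρ1 ^ T) / (1 - ρ1)
        + ∑ t ∈ Finset.Icc 1 T, ρ1 ^ (T - t) * (a1 ^ 2 / L) * ε t := by
  have hL : 0 < L := hμ.trans_le hμL
  set κ := 4 * A / ((Nf : ℝ) + Nc) ^ 2 with hκ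
  have hκ_nonneg : 0 ≤ κ := by positivity
  have hκξ2 : κ * ξ2 < 1 := by
    rw [lt_div_iff₀ (by positivity)] at hξ2A
    rw [hκ, div_mul_eq_mul_div, div_lt_one (by positivity)]
    linarith
  have hρ1κ : ρ1 = 1 - μ * (1 - κ * ξ2) / L := by rw [hρ1, hκ]; field_simp; ring
  have hρ2κ : ρ2 = ξ1 * κ / (2 * L) := by rw [hρ2, hκ]; field_simp; ring
  have hgradF (x : E) : gradient F x = (1 / (N : ℝ)) • ∑ n ∈ D, gradient (f n) x := by
    rw [show F = _ from funext hF]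
    exact gradient_const_mul_sum (fun n hn ↦ (hf n hn).differentiableAt) _
  have hround (t : ℕ) (ht₁ : 1 ≤ t) (ht₂ : t ≤ T) :
      F (w (t + 1)) - F wstar ≤ ρ1 * (F (w t) - F wstar) + ρ2 + a1 ^ 2 / L * ε t := by
    have hv := norm_pooled_inexact_average_sub_average_sq_le (hSfD t ht₁ ht₂) (hScD t ht₁ ht₂)
      (hSf t ht₁ ht₂) (hSc t ht₁ ht₂) hN hNf hNc (fun n hn ↦ hgradbound n hn (w t))
      (hagg t ht₁ ht₂)
    rw [← ha1, ← ha2, ← hgradF, ← hA, ← hκ] at hv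
    have := inexact_gradient_step_gap_le hμ hL hκξ2.le (hsc wstar (w t)) (hsm · (w t)) hv
    rw [hupd t ht₁ ht₂, hρ1κ, hρ2κ]
    convert this using 2
    field_simp
  have hρ1_nonneg : 0 ≤ ρ1 := by
    rw [hρ1κ, sub_nonneg, div_le_one hL]
    nlinarith [mul_nonneg hκ_nonneg hξ2pos.le]
  have hρ1_lt_one : ρ1 < 1 := by
    rw [hρ1κ, sub_lt_self_iff]
    exact div_pos (mul_pos hμ (by linarith)) hL
  simpa only [mul_assoc] using le_pow_mul_add_geom_add_sum_of_le_mul_add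
    (u := fun t ↦ F (w t) - F wstar) hρ1_nonneg hρ1_lt_one.ne hround

/-- Theorem 1 of the paper (deterministic form): optimality gap of SemiFL after `T`
rounds, with per-round over-the-air aggregation distortion bounded by `ε t`. -/
theorem semifl_optimality_gap
    {E : Type*} [NormedAddCommGroup E] [InnerProductSpace ℝ E] [CompleteSpace E]
    {ι : Type*} (D : Finset ι) (N : ℕ) (hN : D.card = N)
    (f : ι → E → ℝ) (hf : ∀ n ∈ D, Differentiable ℝ (f n))
    (F : E → ℝ) (hF : ∀ w : E, F w = (1 / (N : ℝ)) * ∑ n ∈ D, f n w)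
    (μ L : ℝ) (hμ : 0 < μ) (hμL : μ ≤ L)
    (hsc : ∀ w w' : E,
      F w ≥ F w' + ⟪w - w', gradient F w'⟫ + μ / 2 * ‖w - w'‖ ^ 2)
    (hsm : ∀ w w' : E,
      F w ≤ F w' + ⟪w - w', gradient F w'⟫ + L / 2 * ‖w - w'‖ ^ 2)
    (ξ1 ξ2 : ℝ) (hξ1 : 0 ≤ ξ1) (hξ2pos : 0 < ξ2)
    (hgradbound : ∀ n ∈ D, ∀ w : E,
      ‖gradient (f n) w‖ ^ 2 ≤ ξ1 + ξ2 * ‖gradient F w‖ ^ 2)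
    (wstar : E) (hmin : ∀ w : E, F wstar ≤ F w)
    (Nf Nc : ℕ) (hNf : 0 < Nf) (hNc : 0 < Nc) (hNfN : Nf ≤ N) (hNcN : Nc ≤ N)
    (A : ℝ) (hA : A = (Nf : ℝ) * ((N : ℝ) - Nf) + (Nc : ℝ) * ((N : ℝ) - Nc))
    (hApos : 0 < A)
    (hξ2A : ξ2 < ((Nf : ℝ) + Nc) ^ 2 / (4 * A))
    (a1 a2 : ℝ) (ha1 : a1 = (Nf : ℝ) / ((Nf : ℝ) + Nc))
    (ha2 : a2 = (Nc : ℝ) / ((Nf : ℝ) + Nc))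
    (ρ1 ρ2 : ℝ)
    (hρ1 : ρ1 = 1 - μ / L + 4 * μ * ξ2 * A / (L * ((Nf : ℝ) + Nc) ^ 2))
    (hρ2 : ρ2 = 2 * ξ1 * A / (L * ((Nf : ℝ) + Nc) ^ 2))
    (T : ℕ) (hT : 1 ≤ T)
    (Sf Sc : ℕ → Finset ι)
    (hSfD : ∀ t : ℕ, 1 ≤ t → t ≤ T → Sf t ⊆ D)
    (hScD : ∀ t : ℕ, 1 ≤ t → t ≤ T → Sc t ⊆ D)
    (hSf : ∀ t : ℕ, 1 ≤ t → t ≤ T → (Sf t).card = Nf)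
    (hSc : ∀ t : ℕ, 1 ≤ t → t ≤ T → (Sc t).card = Nc)
    (w : ℕ → E) (gfhat : ℕ → E) (ε : ℕ → ℝ)
    (hε : ∀ t : ℕ, 1 ≤ t → t ≤ T → 0 ≤ ε t)
    (hagg : ∀ t : ℕ, 1 ≤ t → t ≤ T →
      ‖(1 / (Nf : ℝ)) • ∑ n ∈ Sf t, gradient (f n) (w t) - gfhat t‖ ^ 2 ≤ ε t)
    (hupd : ∀ t : ℕ, 1 ≤ t → t ≤ T →
      w (t + 1) = w t - (1 / L) •
        (a1 • gfhat t + a2 • ((1 / (Nc : ℝ)) • ∑ n ∈ Sc t, gradient (f n) (w t)))) :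
    F (w (T + 1)) - F wstar ≤
      ρ1 ^ T * (F (w 1) - F wstar) + ρ2 * (1 - ρ1 ^ T) / (1 - ρ1)
        + ∑ t ∈ Finset.Icc 1 T, ρ1 ^ (T - t) * (a1 ^ 2 / L) * ε t :=
  semifl_optimality_gap_general D N hN f hf F hF μ L hμ hμL hsc hsm ξ1 ξ2 hξ2pos hgradbound wstar Nf
    Nc hNf hNc A hA hApos hξ2A a1 a2 ha1 ha2 ρ1 ρ2 hρ1 hρ2 T Sf Sc hSfD hScD hSf hSc w gfhat ε hagg
    hupd
end

section
/- Let E be a real inner product space, D a finite set with |D| = N, and f_n : E → ℝ differentiable for n ∈ D with global loss F(w) = (1/N)·∑_{n∈D} f_n(w). Assume F is μ-strongly convex and L-smooth with 0 < μ ≤ L, the sample-gradient bound ‖∇f_n(w)‖² ≤ ξ1 + ξ2·‖∇F(w)‖² holds for all n ∈ D and w ∈ E (ξ1 ≥ 0, ξ2 > 0), and w* is a global minimizer of F. Let S be a positive integer with S < N and 0 < ξ2 < S/(N − S), and set ρ̂1 = 1 − μ/L + μξ2·(N−S)/(L·S) and ρ̂2 = ξ1·(N−S)/(2·L·S). For each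 round t = 1, …, T let S_t ⊆ D with |S_t| = S and update w_{t+1} = w_t − (1/L)·(1/S)·∑_{n∈S_t} ∇f_n(w_t). Then F(w_{T+1}) − F(w*) ≤ ρ̂1^T·(F(w_1) − F(w*)) + ρ̂2·(1 − ρ̂1^T)/(1 − ρ̂1). -/
/-! Each round is an inexact gradient step `x ↦ x - (1/L) g`. By `L`-smoothness the loss drops to
at most `F x + (‖g - ∇F x‖² - ‖∇F x‖²) / (2L)`; the average of the gradients over a subset of size
`S` differs from the full average by at most `((N - S) / S) · maxₙ ‖∇fₙ x‖²` in squared norm; and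
strong convexity gives the Polyak–Łojasiewicz inequality `2μ (F x - F w*) ≤ ‖∇F x‖²`. Together
they give the contraction `gapₜ₊₁ ≤ ρ̂₁ gapₜ + ρ̂₂`, which unrolls to the geometric bound. -/

local notation "⟪" x ", " y "⟫" => @inner ℝ _ _ x y

open Finset

section

variable {E : Type*} [NormedAddCommGroup E] [InnerProductSpace ℝ E]

theorem two_mul_sub_le_sq_norm_of_strongly_convex {F : E → ℝ} {μ : ℝ} (hμ : 0 < μ)
    {x y g : E} (hsc : F y ≥ F x + ⟪y - x, g⟫ + μ / 2 * ‖y - x‖ ^ 2) :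
    2 * μ * (F x - F y) ≤ ‖g‖ ^ 2 := by
  have h : 0 ≤ ‖μ • (y - x) + g‖ ^ 2 := sq_nonneg _
  rw [norm_add_sq_real, norm_smul, real_inner_smul_left, Real.norm_of_nonneg hμ.le] at h
  nlinarith

theorem le_add_sq_norm_sub_of_smooth {F : E → ℝ} {L : ℝ} (hL : 0 < L) {x g G : E}
    (hsm : F (x - (1 / L) • g) ≤ F x + ⟪x - (1 / L) • g - x, G⟫
      + L / 2 * ‖x - (1 / L) • g - x‖ ^ 2) :
    F (x - (1 / L) • g) ≤ F x + (‖g - G‖ ^ 2 - ‖G‖ ^ 2) / (2 * L) := by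
  rw [sub_sub_cancel_left, inner_neg_left, norm_neg, real_inner_smul_left, norm_smul,
    Real.norm_of_nonneg (by positivity)] at hsm
  rw [norm_sub_sq_real]
  convert hsm using 1
  field_simp
  ring

theorem HasGradientAt.const_mul_sum [CompleteSpace E] {ι : Type*} {D : Finset ι}
    {f : ι → E → ℝ} {g : ι → E} {x : E} (hf : ∀ n ∈ D, HasGradientAt (f n) (g n) x) (c : ℝ) :
    HasGradientAt (fun w => c * ∑ n ∈ D, f n w) (c • ∑ n ∈ D, g n) x := by
  rw [hasGradientAt_iff_hasFDerivAt, map_smul, map_sum]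
  exact (HasFDerivAt.fun_sum fun n hn => (hf n hn).hasFDerivAt).const_mul c

theorem norm_avg_sub_avg_le {ι : Type*} {v : ι → E} {s D : Finset ι} (hsD : s ⊆ D)
    (hs : s.Nonempty) {M : ℝ} (hv : ∀ n ∈ D, ‖v n‖ ≤ M) :
    ‖(#s : ℝ)⁻¹ • ∑ n ∈ s, v n - (#D : ℝ)⁻¹ • ∑ n ∈ D, v n‖
      ≤ 2 * (#D - #s) / #D * M := by
  classical
  have hS : (0 : ℝ) < #s := by exact_mod_cast hs.card_pos
  have hSN : (#s : ℝ) ≤ #D := by exact_mod_cast card_le_card hsD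
  have hD : (0 : ℝ) < #D := hS.trans_le hSN
  have hcoef : 0 ≤ (#s : ℝ)⁻¹ - (#D : ℝ)⁻¹ := sub_nonneg.2 (inv_anti₀ hS hSN)
  have hsum_le : ∀ t ⊆ D, ‖∑ n ∈ t, v n‖ ≤ #t * M := fun t ht =>
    (norm_sum_le _ _).trans <| by
      simpa using sum_le_sum fun n hn => hv n (ht hn)
  have hsplit : (#s : ℝ)⁻¹ • ∑ n ∈ s, v n - (#D : ℝ)⁻¹ • ∑ n ∈ D, v n
      = ((#s : ℝ)⁻¹ - (#D : ℝ)⁻¹) • ∑ n ∈ s, v n - (#D : ℝ)⁻¹ • ∑ n ∈ D \ s, v n := by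
    rw [← sum_sdiff hsD]; module
  calc _ ≤ ((#s : ℝ)⁻¹ - (#D : ℝ)⁻¹) * (#s * M) + (#D : ℝ)⁻¹ * (#(D \ s) * M) := by
        rw [hsplit]
        refine (norm_sub_le _ _).trans ?_
        rw [norm_smul, norm_smul, Real.norm_of_nonneg hcoef, Real.norm_of_nonneg (by positivity)]
        gcongr
        · exact hsum_le s hsD
        · exact hsum_le _ sdiff_subset
    _ = 2 * (#D - #s) / #D * M := by
        rw [card_sdiff_of_subset hsD, Nat.cast_sub (card_le_card hsD)]
        field_simp
        ring

theorem sq_norm_avg_sub_avg_le {ι : Type*} {v : ι → E} {s D : Finset ι} (hsD : s ⊆ D)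
    (hs : s.Nonempty) {K : ℝ} (hv : ∀ n ∈ D, ‖v n‖ ^ 2 ≤ K) :
    ‖(#s : ℝ)⁻¹ • ∑ n ∈ s, v n - (#D : ℝ)⁻¹ • ∑ n ∈ D, v n‖ ^ 2
      ≤ (#D - #s) / #s * K := by
  obtain ⟨m, hm⟩ := hs
  have hK : 0 ≤ K := (sq_nonneg _).trans (hv m (hsD hm))
  have hS : (0 : ℝ) < #s := by exact_mod_cast card_pos.2 ⟨m, hm⟩
  have hSN : (#s : ℝ) ≤ #D := by exact_mod_cast card_le_card hsD
  have hnorm := norm_avg_sub_avg_le hsD ⟨m, hm⟩ fun n hn =>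
    Real.le_sqrt_of_sq_le (hv n hn)
  -- equivalent to `(N - 2S)² ≥ 0`
  have hconst : (2 * (#D - #s) / #D : ℝ) ^ 2 ≤ (#D - #s) / #s := by
    rw [div_pow, div_le_div_iff₀ (by positivity [hS.trans_le hSN]) hS]
    nlinarith [sq_nonneg ((#D : ℝ) - 2 * #s)]
  calc _ ≤ (2 * (#D - #s) / #D * √K) ^ 2 := by gcongr
    _ ≤ (#D - #s) / #s * K := by
        rw [mul_pow, Real.sq_sqrt hK]; gcongr

theorem sub_le_of_inexact_gradient_step [CompleteSpace E] {F : E → ℝ} {μ L : ℝ} (hμ : 0 < μ)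
    (hL : 0 < L)
    (hsc : ∀ w w' : E, F w ≥ F w' + ⟪w - w', gradient F w'⟫ + μ / 2 * ‖w - w'‖ ^ 2)
    (hsm : ∀ w w' : E, F w ≤ F w' + ⟪w - w', gradient F w'⟫ + L / 2 * ‖w - w'‖ ^ 2)
    {r ξ1 ξ2 : ℝ} (hr : ξ2 * r ≤ 1) {x g : E}
    (herr : ‖g - gradient F x‖ ^ 2 ≤ r * (ξ1 + ξ2 * ‖gradient F x‖ ^ 2)) (y : E) :
    F (x - (1 / L) • g) - F y
      ≤ (1 - μ / L + μ * ξ2 * r / L) * (F x - F y) + ξ1 * r / (2 * L) := by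
  set G := gradient F x
  have hdescent := le_add_sq_norm_sub_of_smooth hL (hsm (x - (1 / L) • g) x)
  have hPL := two_mul_sub_le_sq_norm_of_strongly_convex hμ (hsc y x)
  have hPL' : (ξ2 * r - 1) * ‖G‖ ^ 2 ≤ (ξ2 * r - 1) * (2 * μ * (F x - F y)) :=
    mul_le_mul_of_nonpos_left hPL (by linarith)
  calc F (x - (1 / L) • g) - F y ≤ F x - F y + (‖g - G‖ ^ 2 - ‖G‖ ^ 2) / (2 * L) := by
        linarith
    _ ≤ F x - F y + (r * ξ1 + (ξ2 * r - 1) * ‖G‖ ^ 2) / (2 * L) := by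
        gcongr; linarith
    _ ≤ F x - F y + (r * ξ1 + (ξ2 * r - 1) * (2 * μ * (F x - F y))) / (2 * L) := by
        gcongr
    _ = (1 - μ / L + μ * ξ2 * r / L) * (F x - F y) + ξ1 * r / (2 * L) := by
        field_simp; ring

end

theorem le_geom_of_le_mul_add {e : ℕ → ℝ} {ρ c : ℝ} (hρ0 : 0 ≤ ρ) (hρ1 : ρ ≠ 1) {T : ℕ}
    (he : ∀ k < T, e (k + 1) ≤ ρ * e k + c) :
    e T ≤ ρ ^ T * e 0 + c * (1 - ρ ^ T) / (1 - ρ) := by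
  induction T with
  | zero => simp
  | succ k ih =>
    have hρ : 1 - ρ ≠ 0 := sub_ne_zero.2 hρ1.symm
    calc e (k + 1) ≤ ρ * (ρ ^ k * e 0 + c * (1 - ρ ^ k) / (1 - ρ)) + c :=
          (he k k.lt_succ_self).trans <| by
            gcongr; exact ih fun j hj => he j (hj.trans k.lt_succ_self)
      _ = ρ ^ (k + 1) * e 0 + c * (1 - ρ ^ (k + 1)) / (1 - ρ) := by
          field_simp; ring

theorem one_sub_div_add_mul_div_mem_Ico {μ L a : ℝ} (hμ : 0 < μ) (hμL : μ ≤ L) (ha0 : 0 ≤ a)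
    (ha1 : a < 1) : 1 - μ / L + μ * a / L ∈ Set.Ico 0 1 := by
  have hL : 0 < L := hμ.trans_le hμL
  have hμa : μ * a / L < μ / L := div_lt_div_of_pos_right (mul_lt_of_lt_one_right hμ ha1) hL
  have hμL' : μ / L ≤ 1 := (div_le_one hL).2 hμL
  have : 0 ≤ μ * a / L := by positivity
  constructor <;> linarith

theorem semifl_cl_optimality_gap_general
    {E : Type*} [NormedAddCommGroup E] [InnerProductSpace ℝ E] [CompleteSpace E]
    {ι : Type*} (D : Finset ι) (N : ℕ) (hN : D.card = N)
    (f : ι → E → ℝ) (hf : ∀ n ∈ D, Differentiable ℝ (f n))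
    (F : E → ℝ) (hF : ∀ w : E, F w = (1 / (N : ℝ)) * ∑ n ∈ D, f n w)
    (μ L : ℝ) (hμ : 0 < μ) (hμL : μ ≤ L)
    (hsc : ∀ w w' : E,
      F w ≥ F w' + ⟪w - w', gradient F w'⟫ + μ / 2 * ‖w - w'‖ ^ 2)
    (hsm : ∀ w w' : E,
      F w ≤ F w' + ⟪w - w', gradient F w'⟫ + L / 2 * ‖w - w'‖ ^ 2)
    (ξ1 ξ2 : ℝ) (hξ2pos : 0 < ξ2)
    (hgradbound : ∀ n ∈ D, ∀ w : E,
      ‖gradient (f n) w‖ ^ 2 ≤ ξ1 + ξ2 * ‖gradient F w‖ ^ 2)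
    (wstar : E)
    (S : ℕ) (hS : 0 < S) (hSN : S < N)
    (hξ2 : ξ2 < (S : ℝ) / ((N : ℝ) - S))
    (ρ1hat ρ2hat : ℝ)
    (hρ1 : ρ1hat = 1 - μ / L + μ * ξ2 * ((N : ℝ) - S) / (L * S))
    (hρ2 : ρ2hat = ξ1 * ((N : ℝ) - S) / (2 * L * S))
    (T : ℕ)
    (St : ℕ → Finset ι)
    (hStD : ∀ t : ℕ, 1 ≤ t → t ≤ T → St t ⊆ D)
    (hSt : ∀ t : ℕ, 1 ≤ t → t ≤ T → (St t).card = S)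
    (w : ℕ → E)
    (hupd : ∀ t : ℕ, 1 ≤ t → t ≤ T →
      w (t + 1) = w t - (1 / L) • ((1 / (S : ℝ)) • ∑ n ∈ St t, gradient (f n) (w t))) :
    F (w (T + 1)) - F wstar ≤
      ρ1hat ^ T * (F (w 1) - F wstar) + ρ2hat * (1 - ρ1hat ^ T) / (1 - ρ1hat) := by
  have hL : 0 < L := hμ.trans_le hμL
  have hS₀ : (0 : ℝ) < S := by exact_mod_cast hS
  have hNS : (0 : ℝ) < N - S := sub_pos.2 (by exact_mod_cast hSN)
  set r : ℝ := ((N : ℝ) - S) / S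
  have hr : ξ2 * r < 1 := by
    rwa [mul_div_assoc', div_lt_one hS₀, ← lt_div_iff₀ hNS]
  have hρ1r : ρ1hat = 1 - μ / L + μ * (ξ2 * r) / L := by rw [hρ1]; ring
  have hρ2r : ρ2hat = ξ1 * r / (2 * L) := by rw [hρ2]; ring
  obtain ⟨hρ1_nonneg, hρ1_lt⟩ : ρ1hat ∈ Set.Ico 0 1 :=
    hρ1r ▸ one_sub_div_add_mul_div_mem_Ico hμ hμL (by positivity) hr
  have hgradF : ∀ x, gradient F x = (N : ℝ)⁻¹ • ∑ n ∈ D, gradient (f n) x := fun x => by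
    rw [funext hF]
    simp_rw [one_div]
    exact (HasGradientAt.const_mul_sum
      (fun n hn => ((hf n hn) x).hasGradientAt) _).gradient
  refine le_geom_of_le_mul_add (e := fun k => F (w (k + 1)) - F wstar) hρ1_nonneg hρ1_lt.ne
    fun k hk => ?_
  have hk1 : 1 ≤ k + 1 := Nat.le_add_left 1 k
  have herr : ‖(1 / (S : ℝ)) • ∑ n ∈ St (k + 1), gradient (f n) (w (k + 1))
      - gradient F (w (k + 1))‖ ^ 2 ≤ r * (ξ1 + ξ2 * ‖gradient F (w (k + 1))‖ ^ 2) := by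
    have hcard := hSt (k + 1) hk1 hk
    have := sq_norm_avg_sub_avg_le (hStD (k + 1) hk1 hk) (card_pos.1 (hcard ▸ hS))
      fun n hn => hgradbound n hn (w (k + 1))
    rwa [hcard, hN, ← hgradF, ← one_div] at this
  rw [hupd (k + 1) hk1 hk, hρ1r, hρ2r, ← mul_assoc]
  exact sub_le_of_inexact_gradient_step hμ hL hsc hsm hr.le herr wstar

/-- Centralized learning branch of Theorem 2: optimality gap `ψ_T^{CL}` after `T`
rounds of gradient descent using `S` randomly selected samples per round. -/
theorem semifl_cl_optimality_gap
    {E : Type*} [NormedAddCommGroup E] [InnerProductSpace ℝ E] [CompleteSpace E]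
    {ι : Type*} (D : Finset ι) (N : ℕ) (hN : D.card = N)
    (f : ι → E → ℝ) (hf : ∀ n ∈ D, Differentiable ℝ (f n))
    (F : E → ℝ) (hF : ∀ w : E, F w = (1 / (N : ℝ)) * ∑ n ∈ D, f n w)
    (μ L : ℝ) (hμ : 0 < μ) (hμL : μ ≤ L)
    (hsc : ∀ w w' : E,
      F w ≥ F w' + ⟪w - w', gradient F w'⟫ + μ / 2 * ‖w - w'‖ ^ 2)
    (hsm : ∀ w w' : E,
      F w ≤ F w' + ⟪w - w', gradient F w'⟫ + L / 2 * ‖w - w'‖ ^ 2)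
    (ξ1 ξ2 : ℝ) (hξ1 : 0 ≤ ξ1) (hξ2pos : 0 < ξ2)
    (hgradbound : ∀ n ∈ D, ∀ w : E,
      ‖gradient (f n) w‖ ^ 2 ≤ ξ1 + ξ2 * ‖gradient F w‖ ^ 2)
    (wstar : E) (hmin : ∀ w : E, F wstar ≤ F w)
    (S : ℕ) (hS : 0 < S) (hSN : S < N)
    (hξ2 : ξ2 < (S : ℝ) / ((N : ℝ) - S))
    (ρ1hat ρ2hat : ℝ)
    (hρ1 : ρ1hat = 1 - μ / L + μ * ξ2 * ((N : ℝ) - S) / (L * S))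
    (hρ2 : ρ2hat = ξ1 * ((N : ℝ) - S) / (2 * L * S))
    (T : ℕ) (hT : 1 ≤ T)
    (St : ℕ → Finset ι)
    (hStD : ∀ t : ℕ, 1 ≤ t → t ≤ T → St t ⊆ D)
    (hSt : ∀ t : ℕ, 1 ≤ t → t ≤ T → (St t).card = S)
    (w : ℕ → E)
    (hupd : ∀ t : ℕ, 1 ≤ t → t ≤ T →
      w (t + 1) = w t - (1 / L) • ((1 / (S : ℝ)) • ∑ n ∈ St t, gradient (f n) (w t))) :
    F (w (T + 1)) - F wstar ≤
      ρ1hat ^ T * (F (w 1) - F wstar) + ρ2hat * (1 - ρ1hat ^ T) / (1 - ρ1hat) :=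
  semifl_cl_optimality_gap_general D N hN f hf F hF μ L hμ hμL hsc hsm ξ1 ξ2 hξ2pos hgradbound wstar
    S hS hSN hξ2 ρ1hat ρ2hat hρ1 hρ2 T St hStD hSt w hupd
end
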